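/- arXiv:1008.1675 — 5 statements merged into one kernel-verified Lean document; each statement's English description precedes it below -/
import Mathlib

section
/- Let t > 0, a ≥ 0 be reals, and L₁, L₂ ≥ 0 with L₁² ≤ a, L₂² ≤ a. Suppose I ∈ ℂ satisfies |I| ≤ L₁L₂ and (t+a)(L₁² + L₂² - 2 Re I) + |I|² - L₁²L₂² = 0. Then L₁ = L₂, I is real nonnegative, and |I| = L₁L₂ (hence I = L₁² = L₂²). -/
/-! With `δ = L₁L₂ - ‖I‖ ≥ 0`, the bounds `Re I ≤ ‖I‖` and `L₁L₂ + ‖I‖ ≤ L₁² + L₂² ≤ 2a` show that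
the left-hand side of the constraint is at least `2tδ + (t + a)(L₁ - L₂)²`. Both terms are
nonnegative, so the constraint forces `δ = 0` and `L₁ = L₂`; it then reduces to
`Re I = L₁² = ‖I‖`, which pins `I` to the nonnegative real `L₁²`. -/

open ComplexOrder in
theorem Complex.eq_ofReal_of_re_eq_of_norm_eq {z : ℂ} {r : ℝ} (hre : z.re = r)
    (hnorm : ‖z‖ = r) : z = r := by
  have hz : 0 ≤ z := Complex.re_eq_norm.mp (hre.trans hnorm.symm)
  exact Complex.ext hre (Complex.nonneg_iff.mp hz).2.symm

theorem two_mul_sub_norm_add_mul_sq_le {t a L₁ L₂ : ℝ} {I : ℂ} (ht : 0 ≤ t)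
    (hL₁a : L₁ ^ 2 ≤ a) (hL₂a : L₂ ^ 2 ≤ a) (hI : ‖I‖ ≤ L₁ * L₂) :
    2 * t * (L₁ * L₂ - ‖I‖) + (t + a) * (L₁ - L₂) ^ 2 ≤
      (t + a) * (L₁ ^ 2 + L₂ ^ 2 - 2 * I.re) + ‖I‖ ^ 2 - L₁ ^ 2 * L₂ ^ 2 := by
  have hta : 0 ≤ t + a := by nlinarith [sq_nonneg L₁]
  have hδ : 0 ≤ L₁ * L₂ - ‖I‖ := sub_nonneg.mpr hI
  have hsum : L₁ * L₂ + ‖I‖ ≤ 2 * a := by nlinarith [sq_nonneg (L₁ - L₂)]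
  nlinarith [mul_le_mul_of_nonneg_left (Complex.re_le_norm I) hta,
    mul_le_mul_of_nonneg_left hsum hδ]

theorem stmt_3_general (t a L₁ L₂ : ℝ) (ht : 0 < t)
    (hL₁a : L₁ ^ 2 ≤ a) (hL₂a : L₂ ^ 2 ≤ a)
    (I : ℂ) (hI : ‖I‖ ≤ L₁ * L₂)
    (heq : (t + a) * (L₁ ^ 2 + L₂ ^ 2 - 2 * I.re) + ‖I‖ ^ 2
        - L₁ ^ 2 * L₂ ^ 2 = 0) :
    L₁ = L₂ ∧ I.im = 0 ∧ 0 ≤ I.re ∧ ‖I‖ = L₁ * L₂ ∧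
      I = (L₁ ^ 2 : ℂ) ∧ I = (L₂ ^ 2 : ℂ) := by
  have hbound := two_mul_sub_norm_add_mul_sq_le ht.le hL₁a hL₂a hI
  rw [heq] at hbound
  have hta : 0 < t + a := by nlinarith [sq_nonneg L₁]
  have hgap : 0 ≤ 2 * t * (L₁ * L₂ - ‖I‖) := by have := sub_nonneg.mpr hI; positivity
  have hsq : 0 ≤ (t + a) * (L₁ - L₂) ^ 2 := by positivity
  have hnorm : ‖I‖ = L₁ * L₂ := by
    have := (mul_eq_zero.mp (le_antisymm (by linarith) hgap)).resolve_left (by positivity)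
    linarith
  have hL : L₁ = L₂ := by
    have := (mul_eq_zero.mp (le_antisymm (by linarith) hsq)).resolve_left hta.ne'
    exact sub_eq_zero.mp (pow_eq_zero_iff two_ne_zero |>.mp this)
  subst hL
  have hre : I.re = L₁ ^ 2 := by
    have := (mul_eq_zero.mp (show (t + a) * (L₁ ^ 2 + L₁ ^ 2 - 2 * I.re) = 0 by
      rw [hnorm] at heq; linarith)).resolve_left hta.ne'
    linarith
  have hI_eq : I = (L₁ ^ 2 : ℝ) := Complex.eq_ofReal_of_re_eq_of_norm_eq hre (by rw [hnorm, sq])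
  push_cast at hI_eq
  subst hI_eq
  refine ⟨rfl, ?_, ?_, hnorm, rfl, rfl⟩ <;> simp [← Complex.ofReal_pow, sq_nonneg]

/-- Key algebraic lemma: if `(t+a)(L₁²+L₂²-2 Re I) + |I|² - L₁²L₂² = 0` with
`t > 0`, `L₁² ≤ a`, `L₂² ≤ a`, `|I| ≤ L₁L₂`, then `L₁ = L₂`, `I` is a
nonnegative real, and `|I| = L₁L₂` (hence `I = L₁² = L₂²`). -/
theorem stmt_3 (t a L₁ L₂ : ℝ) (ht : 0 < t) (ha : 0 ≤ a)
    (hL₁ : 0 ≤ L₁) (hL₂ : 0 ≤ L₂) (hL₁a : L₁ ^ 2 ≤ a) (hL₂a : L₂ ^ 2 ≤ a)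
    (I : ℂ) (hI : ‖I‖ ≤ L₁ * L₂)
    (heq : (t + a) * (L₁ ^ 2 + L₂ ^ 2 - 2 * I.re) + ‖I‖ ^ 2
        - L₁ ^ 2 * L₂ ^ 2 = 0) :
    L₁ = L₂ ∧ I.im = 0 ∧ 0 ≤ I.re ∧ ‖I‖ = L₁ * L₂ ∧
      I = (L₁ ^ 2 : ℂ) ∧ I = (L₂ ^ 2 : ℂ) :=
  stmt_3_general t a L₁ L₂ ht hL₁a hL₂a I hI heq
end

section
/- Let β₁,...,β_N ∈ ℂ and β'₁,...,β'_N ∈ ℂ with Σ|β_j|² ≤ a and Σ|β'_j|² ≤ a for some a ≥ 0, and let t > 0. If |t + a - Σ β_j conj(β'_j)|² = (t + a - Σ|β_j|²)(t + a - Σ|β'_j|²), then β_j = β'_j for all j. -/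
/-!
Write `m = (‖x‖² + ‖y‖²) / 2` and `r = re ⟪y, x⟫`. Since `‖x - y‖² = 2 (m - r)`, we have `r ≤ m`,
with equality iff `x = y`. Hence, for `c ≥ m`,
`‖c - ⟪y, x⟫‖² ≥ (c - r)² ≥ (c - m)² ≥ (c - ‖x‖²)(c - ‖y‖²)`,
the last step being AM-GM. Equality of the two ends forces `r = m`, i.e. `x = y`.
-/

open RCLike InnerProductSpace

section InnerProduct

variable {𝕜 E : Type*} [RCLike 𝕜] [NormedAddCommGroup E] [InnerProductSpace 𝕜 E]

lemma eq_of_norm_sub_inner_sq_eq {x y : E} {c : ℝ} (hc : ‖x‖ ^ 2 + ‖y‖ ^ 2 ≤ 2 * c)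
    (heq : ‖(c : 𝕜) - ⟪y, x⟫_𝕜‖ ^ 2 = (c - ‖x‖ ^ 2) * (c - ‖y‖ ^ 2)) : x = y := by
  set m := (‖x‖ ^ 2 + ‖y‖ ^ 2) / 2 with hm
  set r := re ⟪y, x⟫_𝕜
  have hdist : ‖x - y‖ ^ 2 = 2 * (m - r) := by
    rw [norm_sub_sq (𝕜 := 𝕜), ← inner_conj_symm, conj_re]
    ring
  have hrm : r ≤ m := by nlinarith [sq_nonneg ‖x - y‖]
  have hre : (c - r) ^ 2 ≤ ‖(c : 𝕜) - ⟪y, x⟫_𝕜‖ ^ 2 := by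
    have := sq_le_sq.mpr ((abs_re_le_norm ((c : 𝕜) - ⟪y, x⟫_𝕜)).trans_eq (abs_norm _).symm)
    simpa [r] using this
  have hamgm : (c - ‖x‖ ^ 2) * (c - ‖y‖ ^ 2) ≤ (c - m) ^ 2 := by
    nlinarith [sq_nonneg (‖x‖ ^ 2 - ‖y‖ ^ 2)]
  have hsq : (c - r) ^ 2 ≤ (c - m) ^ 2 := by linarith
  have hcm : 0 ≤ c - m := by rw [hm]; linarith
  have hcr : 0 ≤ c - r := by linarith
  have hmr : c - r ≤ c - m := (pow_le_pow_iff_left₀ hcr hcm two_ne_zero).mp hsq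
  have hzero : ‖x - y‖ ^ 2 = 0 := by rw [hdist]; linarith
  exact sub_eq_zero.mp (norm_eq_zero.mp (pow_eq_zero_iff two_ne_zero |>.mp hzero))

end InnerProduct

theorem stmt_5_general (N : ℕ) (β β' : Fin N → ℂ) (a t : ℝ) (ht : 0 < t)
    (hβ : ∑ j, ‖β j‖ ^ 2 ≤ a)
    (hβ' : ∑ j, ‖β' j‖ ^ 2 ≤ a)
    (heq : ‖(t : ℂ) + a - ∑ j, β j * (starRingEnd ℂ) (β' j)‖ ^ 2
      = (t + a - ∑ j, ‖β j‖ ^ 2)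
        * (t + a - ∑ j, ‖β' j‖ ^ 2)) :
    ∀ j, β j = β' j := by
  let x : EuclideanSpace ℂ (Fin N) := WithLp.toLp 2 β
  let y : EuclideanSpace ℂ (Fin N) := WithLp.toLp 2 β'
  have hx : ‖x‖ ^ 2 = ∑ j, ‖β j‖ ^ 2 := EuclideanSpace.norm_sq_eq x
  have hy : ‖y‖ ^ 2 = ∑ j, ‖β' j‖ ^ 2 := EuclideanSpace.norm_sq_eq y
  have hinner : ⟪y, x⟫_ℂ = ∑ j, β j * (starRingEnd ℂ) (β' j) :=
    EuclideanSpace.inner_eq_star_dotProduct y x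
  have hxy : x = y := by
    refine eq_of_norm_sub_inner_sq_eq (𝕜 := ℂ) (c := t + a) (by linarith) ?_
    rw [hx, hy, hinner]
    push_cast
    exact heq
  exact fun j => congr_fun (congrArg WithLp.ofLp hxy) j

/-- If `Σ|β_j|² ≤ a`, `Σ|β'_j|² ≤ a`, `t > 0`, and
`|t + a - Σ β_j conj(β'_j)|² = (t + a - Σ|β_j|²)(t + a - Σ|β'_j|²)`,
then `β_j = β'_j` for all `j`. -/
theorem stmt_5 (N : ℕ) (β β' : Fin N → ℂ) (a t : ℝ) (ha : 0 ≤ a) (ht : 0 < t)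
    (hβ : ∑ j, ‖β j‖ ^ 2 ≤ a)
    (hβ' : ∑ j, ‖β' j‖ ^ 2 ≤ a)
    (heq : ‖(t : ℂ) + a - ∑ j, β j * (starRingEnd ℂ) (β' j)‖ ^ 2
      = (t + a - ∑ j, ‖β j‖ ^ 2)
        * (t + a - ∑ j, ‖β' j‖ ^ 2)) :
    ∀ j, β j = β' j :=
  stmt_5_general N β β' a t ht hβ hβ' heq
end

section
/- Let φ(z) = (Az+B)/(⟨z,C⟩+d) be a linear fractional map of ℂ^N mapping B_N into B_N, and σ(z) = (A*z - C)/(⟨z,-B⟩ + conj(d)) its adjoint map. If φ(ζ) = η for ζ, η ∈ ∂B_N, then σ(η) = ζ. -/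
/-!
Write `D z = ⟪c, z⟫ + d` for the denominator of `φ z = (T z + b) / D z`, and `e`, `M` for the
denominator and numerator of `σ` at `η`. Adjointness gives `D z - ⟪η, T z + b⟫ = conj e - ⟪M, z⟫`,
and multiplying the left side by `conj (D z)` gives `(1 - ⟪η, φ z⟫) |D z|²`, which has
nonnegative real part on the ball. At `ζ` the left side vanishes, so the affine function
`z ↦ ⟪M, ζ⟫ - ⟪M, z⟫`, times `conj (D z)`, has nonnegative real part on the ball. Approaching `ζ`
tangentially along `(1 - s²) ζ + s u` with `u ⟂ ζ`, the first-order term forces `⟪M, u⟫ = 0`,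
so `M = e ζ`; moreover `e ≠ 0` since `D` does not vanish identically on the ball. Hence
`σ η = e⁻¹ M = ζ`.
-/

open Metric Set Filter Topology

open scoped InnerProductSpace InnerProduct ComplexConjugate Matrix

section LinearFractional

variable {E : Type*} [NormedAddCommGroup E] [InnerProductSpace ℂ E]

lemma norm_one_sub_sq_smul_add_smul_lt_one {ζ u : E} (hζ : ‖ζ‖ = 1) (hu : ‖u‖ ≤ 1)
    (hζu : ⟪ζ, u⟫_ℂ = 0) {s : ℝ} (hs₀ : 0 < s) (hs₁ : s < 1) :
    ‖((1 - s ^ 2 : ℝ) : ℂ) • ζ + (s : ℂ) • u‖ < 1 := by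
  have horth : ⟪((1 - s ^ 2 : ℝ) : ℂ) • ζ, (s : ℂ) • u⟫_ℂ = 0 := by
    rw [inner_smul_left, inner_smul_right, hζu, mul_zero, mul_zero]
  have hsq := norm_add_sq_eq_norm_sq_add_norm_sq_of_inner_eq_zero _ _ horth
  rw [norm_smul, norm_smul, hζ, Complex.norm_real, Complex.norm_real, Real.norm_eq_abs,
    Real.norm_eq_abs, abs_of_pos hs₀, abs_of_pos (by nlinarith), mul_one] at hsq
  have hsu : s * ‖u‖ ≤ s := mul_le_of_le_one_right hs₀.le hu
  have hs2 : s ^ 2 * s ^ 2 < s ^ 2 := mul_lt_of_lt_one_left (by positivity) (by nlinarith)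
  have hsq_lt : ‖((1 - s ^ 2 : ℝ) : ℂ) • ζ + (s : ℂ) • u‖ ^ 2 < 1 := by
    nlinarith [mul_le_mul hsu hsu (by positivity) hs₀.le]
  exact (pow_lt_one_iff_of_nonneg (norm_nonneg _) two_ne_zero).mp hsq_lt

lemma re_inner_mul_nonpos_of_forall_norm_lt_one {ζ u M : E} {g : E → ℂ} (hζ : ‖ζ‖ = 1)
    (hu : ‖u‖ ≤ 1) (hζu : ⟪ζ, u⟫_ℂ = 0) (hg : ContinuousAt g ζ)
    (h : ∀ z : E, ‖z‖ < 1 → 0 ≤ ((⟪M, ζ⟫_ℂ - ⟪M, z⟫_ℂ) * g z).re) :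
    (⟪M, u⟫_ℂ * g ζ).re ≤ 0 := by
  set z : ℝ → E := fun s => ((1 - s ^ 2 : ℝ) : ℂ) • ζ + (s : ℂ) • u
  set q : ℝ → ℝ := fun s => (((s : ℂ) * ⟪M, ζ⟫_ℂ - ⟪M, u⟫_ℂ) * g (z s)).re
  have hz₀ : z 0 = ζ := by simp [z]
  have hq : Tendsto q (𝓝[>] 0) (𝓝 (-(⟪M, u⟫_ℂ * g ζ).re)) := by
    have hgz : ContinuousAt (fun s => g (z s)) 0 :=
      ContinuousAt.comp (g := g) (by rwa [hz₀]) (by fun_prop)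
    have hqc : ContinuousAt q 0 := Complex.continuous_re.continuousAt.comp <|
      (by fun_prop : Continuous fun s : ℝ => (s : ℂ) * ⟪M, ζ⟫_ℂ - ⟪M, u⟫_ℂ).continuousAt.mul hgz
    have hq₀ : q 0 = -(⟪M, u⟫_ℂ * g ζ).re := by
      simp only [q, hz₀, Complex.ofReal_zero, zero_mul, zero_sub, neg_mul, Complex.neg_re]
    exact hq₀ ▸ hqc.tendsto.mono_left nhdsWithin_le_nhds
  have hq_nonneg : ∀ s ∈ Ioo (0 : ℝ) 1, 0 ≤ q s := by
    rintro s ⟨hs₀, hs₁⟩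
    have hs := h (z s) (norm_one_sub_sq_smul_add_smul_lt_one hζ hu hζu hs₀ hs₁)
    have hdiff : ⟪M, ζ⟫_ℂ - ⟪M, z s⟫_ℂ = s * ((s : ℂ) * ⟪M, ζ⟫_ℂ - ⟪M, u⟫_ℂ) := by
      simp only [z, inner_add_right, inner_smul_right]; push_cast; ring
    rw [hdiff, mul_assoc, Complex.re_ofReal_mul] at hs
    exact nonneg_of_mul_nonneg_right hs hs₀
  have := ge_of_tendsto hq (eventually_of_mem (Ioo_mem_nhdsGT one_pos) hq_nonneg)
  linarith

lemma eq_inner_smul_of_forall_norm_lt_one {ζ M : E} {g : E → ℂ} (hζ : ‖ζ‖ = 1)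
    (hg : ContinuousAt g ζ) (hgζ : g ζ ≠ 0)
    (h : ∀ z : E, ‖z‖ < 1 → 0 ≤ ((⟪M, ζ⟫_ℂ - ⟪M, z⟫_ℂ) * g z).re) :
    M = ⟪ζ, M⟫_ℂ • ζ := by
  set v := M - ⟪ζ, M⟫_ℂ • ζ
  by_contra hne
  have hv : 0 < ‖v‖ := norm_pos_iff.mpr (sub_ne_zero.mpr hne)
  have hg₀ : 0 < ‖g ζ‖ := norm_pos_iff.mpr hgζ
  have hζv : ⟪ζ, v⟫_ℂ = 0 := by
    rw [inner_sub_right, inner_smul_right, inner_self_eq_norm_sq_to_K, hζ]; simp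
  have hMv : ⟪M, v⟫_ℂ = (‖v‖ : ℂ) ^ 2 := by
    have hM : M = v + ⟪ζ, M⟫_ℂ • ζ := (sub_add_cancel _ _).symm
    conv_lhs => rw [hM]
    rw [inner_add_left, inner_smul_left, hζv, mul_zero, add_zero]
    exact inner_self_eq_norm_sq_to_K v
  set c : ℂ := conj (g ζ) / ((‖g ζ‖ * ‖v‖ : ℝ) : ℂ)
  have hu : ‖c • v‖ = 1 := by
    rw [norm_smul, norm_div, Complex.norm_conj, Complex.norm_real, Real.norm_eq_abs,
      abs_of_pos (mul_pos hg₀ hv)]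
    field_simp
  have hζu : ⟪ζ, c • v⟫_ℂ = 0 := by rw [inner_smul_right, hζv, mul_zero]
  have hMu : ⟪M, c • v⟫_ℂ * g ζ = ((‖g ζ‖ * ‖v‖ : ℝ) : ℂ) := by
    rw [inner_smul_right, hMv, mul_right_comm, div_mul_eq_mul_div, Complex.conj_mul']
    have : ((‖g ζ‖ * ‖v‖ : ℝ) : ℂ) ≠ 0 := by exact_mod_cast (mul_pos hg₀ hv).ne'
    field_simp
    push_cast; ring
  have := re_inner_mul_nonpos_of_forall_norm_lt_one hζ hu.le hζu hg h
  rw [hMu, Complex.ofReal_re] at this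
  linarith [mul_pos hg₀ hv]

lemma re_sub_inner_mul_conj_pos {a : ℂ} {η w : E} (ha : a ≠ 0) (hη : ‖η‖ ≤ 1)
    (hw : ‖a⁻¹ • w‖ < 1) : 0 < ((a - ⟪η, w⟫_ℂ) * conj a).re := by
  have hre : (⟪η, a⁻¹ • w⟫_ℂ).re < 1 :=
    (Complex.re_le_norm _).trans_lt <| (norm_inner_le_norm η _).trans_lt <|
      (mul_le_of_le_one_left (norm_nonneg _) hη).trans_lt hw
  have hfactor : (a - ⟪η, w⟫_ℂ) * conj a = (1 - ⟪η, a⁻¹ • w⟫_ℂ) * (Complex.normSq a : ℂ) := by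
    rw [inner_smul_right, ← Complex.mul_conj]; field_simp
  rw [hfactor, Complex.re_mul_ofReal, Complex.sub_re, Complex.one_re]
  exact mul_pos (by linarith) (Complex.normSq_pos.mpr ha)

lemma exists_norm_lt_one_inner_add_ne_zero {c ζ : E} {d : ℂ} (hζ : ‖ζ‖ ≤ 1)
    (hζd : ⟪c, ζ⟫_ℂ + d ≠ 0) : ∃ z : E, ‖z‖ < 1 ∧ ⟪c, z⟫_ℂ + d ≠ 0 := by
  by_cases hd : d = 0
  · refine ⟨(2⁻¹ : ℂ) • ζ, ?_, ?_⟩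
    · rw [norm_smul]; norm_num; linarith
    · simp_all
  · exact ⟨0, by simp, by simpa using hd⟩

variable [CompleteSpace E]

lemma inner_add_sub_inner_apply_add (T : E →L[ℂ] E) (b c η z : E) (d : ℂ) :
    ⟪c, z⟫_ℂ + d - ⟪η, T z + b⟫_ℂ = conj (⟪-b, η⟫_ℂ + conj d) - ⟪(T†) η - c, z⟫_ℂ := by
  rw [inner_add_right, ← ContinuousLinearMap.adjoint_inner_left, inner_sub_left, map_add,
    Complex.conj_conj, inner_conj_symm, inner_neg_right]
  ring

/-- At a pole the value is `0` (as `0⁻¹ = 0`), so a map sending the ball into itself may still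
have poles in the ball. -/
noncomputable def linearFractional (T : E →L[ℂ] E) (b c : E) (d : ℂ) (z : E) : E :=
  (⟪c, z⟫_ℂ + d)⁻¹ • (T z + b)

theorem linearFractional_adjoint_apply_eq_of_apply_eq {T : E →L[ℂ] E} {b c ζ η : E} {d : ℂ}
    (hmaps : MapsTo (linearFractional T b c d) (ball 0 1) (ball 0 1))
    (hζ : ‖ζ‖ = 1) (hη : ‖η‖ = 1) (hζη : linearFractional T b c d ζ = η) :
    linearFractional (T†) (-c) (-b) (conj d) η = ζ := by
  set D : E → ℂ := fun z => ⟪c, z⟫_ℂ + d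
  set e : ℂ := ⟪-b, η⟫_ℂ + conj d
  set M : E := (T†) η - c
  have hF : ∀ z, D z - ⟪η, T z + b⟫_ℂ = conj e - ⟪M, z⟫_ℂ := fun z =>
    inner_add_sub_inner_apply_add T b c η z d
  have hDζ : D ζ ≠ 0 := by
    intro h
    simp only [linearFractional, D] at hζη h
    rw [h, inv_zero, zero_smul] at hζη
    simp [← hζη] at hη
  have hFζ : conj e = ⟪M, ζ⟫_ℂ := by
    have hnum : T ζ + b = D ζ • η := by rw [← hζη, linearFractional, smul_inv_smul₀ hDζ]
    have := hF ζ
    rw [hnum, inner_smul_right, inner_self_eq_norm_sq_to_K, hη] at this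
    rw [RCLike.ofReal_one, one_pow, mul_one, sub_self, eq_comm, sub_eq_zero] at this
    exact this
  have hpos : ∀ z, ‖z‖ < 1 → D z ≠ 0 → 0 < ((⟪M, ζ⟫_ℂ - ⟪M, z⟫_ℂ) * conj (D z)).re := by
    intro z hz hDz
    rw [← hFζ, ← hF]
    refine re_sub_inner_mul_conj_pos hDz hη.le ?_
    exact mem_ball_zero_iff.mp (hmaps (mem_ball_zero_iff.mpr hz))
  have hM : M = e • ζ := by
    have hnonneg : ∀ z : E, ‖z‖ < 1 → 0 ≤ ((⟪M, ζ⟫_ℂ - ⟪M, z⟫_ℂ) * conj (D z)).re := by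
      intro z hz
      by_cases hDz : D z = 0
      · simp [hDz]
      · exact (hpos z hz hDz).le
    have hcont : ContinuousAt (fun z => conj (D z)) ζ := by fun_prop
    rw [eq_inner_smul_of_forall_norm_lt_one hζ hcont (by simpa using hDζ) hnonneg,
      ← inner_conj_symm, ← hFζ, Complex.conj_conj]
  have he : e ≠ 0 := by
    obtain ⟨z, hz, hDz⟩ := exists_norm_lt_one_inner_add_ne_zero hζ.le hDζ
    intro he
    have := hpos z hz hDz
    simp [hM, he] at this
  simp only [linearFractional, ← sub_eq_add_neg]
  change e⁻¹ • M = ζ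
  rw [hM, inv_smul_smul₀ he]

end LinearFractional

section Coordinates

variable {ι : Type*} [Fintype ι] [DecidableEq ι]

lemma linearFractional_toEuclideanCLM_apply (A : Matrix ι ι ℂ) (B C : ι → ℂ) (d : ℂ)
    (z : EuclideanSpace ℂ ι) (j : ι) :
    linearFractional (Matrix.toEuclideanCLM (𝕜 := ℂ) A) (WithLp.toLp 2 B) (WithLp.toLp 2 C) d
        z j =
      ((∑ k, A j k * z k) + B j) / ((∑ k, z k * conj (C k)) + d) := by
  simp only [linearFractional, PiLp.inner_apply, RCLike.inner_apply, smul_add, PiLp.add_apply,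
    PiLp.smul_apply, Matrix.ofLp_toEuclideanCLM, Matrix.mulVec, dotProduct, smul_eq_mul, mul_comm]
  ring

lemma adjoint_toEuclideanCLM (A : Matrix ι ι ℂ) :
    (Matrix.toEuclideanCLM (𝕜 := ℂ) A)† = Matrix.toEuclideanCLM (𝕜 := ℂ) Aᴴ := by
  rw [← ContinuousLinearMap.star_eq_adjoint, ← map_star, Matrix.star_eq_conjTranspose]

lemma linearFractional_adjoint_toEuclideanCLM_apply (A : Matrix ι ι ℂ) (B C : ι → ℂ) (d : ℂ)
    (z : EuclideanSpace ℂ ι) (j : ι) :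
    linearFractional ((Matrix.toEuclideanCLM (𝕜 := ℂ) A)†) (-WithLp.toLp 2 C) (-WithLp.toLp 2 B)
        (conj d) z j =
      ((∑ k, conj (A k j) * z k) - C j) / ((∑ k, z k * conj (-B k)) + conj d) := by
  simp only [linearFractional, inner_neg_left, PiLp.inner_apply, RCLike.inner_apply,
    adjoint_toEuclideanCLM, smul_add, smul_neg, PiLp.add_apply, PiLp.smul_apply,
    Matrix.ofLp_toEuclideanCLM, Matrix.mulVec, dotProduct, Matrix.conjTranspose_apply,
    RCLike.star_def, mul_comm, smul_eq_mul, PiLp.neg_apply, map_neg, mul_neg,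
    Finset.sum_neg_distrib]
  ring

end Coordinates

/-- If `φ(z) = (Az+B)/(⟨z,C⟩+d)` maps `B_N` into `B_N` and
`σ(z) = (A*z-C)/(⟨z,-B⟩+conj d)` is its adjoint map, then `φ(ζ) = η` for
`ζ, η ∈ ∂B_N` implies `σ(η) = ζ`. -/
theorem stmt_11 (n : ℕ) (A : Matrix (Fin (n + 1)) (Fin (n + 1)) ℂ)
    (B C : Fin (n + 1) → ℂ) (d : ℂ)
    (φ σ : EuclideanSpace ℂ (Fin (n + 1)) → EuclideanSpace ℂ (Fin (n + 1)))
    (hφ : ∀ z : EuclideanSpace ℂ (Fin (n + 1)), ∀ j,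
      φ z j = ((∑ k, A j k * z k) + B j) / ((∑ k, z k * (starRingEnd ℂ) (C k)) + d))
    (hσ : ∀ z : EuclideanSpace ℂ (Fin (n + 1)), ∀ j,
      σ z j = ((∑ k, (starRingEnd ℂ) (A k j) * z k) - C j)
        / ((∑ k, z k * (starRingEnd ℂ) (-B k)) + (starRingEnd ℂ) d))
    (hmaps : Set.MapsTo φ (ball (0 : EuclideanSpace ℂ (Fin (n + 1))) 1)
      (ball (0 : EuclideanSpace ℂ (Fin (n + 1))) 1))
    (ζ η : EuclideanSpace ℂ (Fin (n + 1)))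
    (hζ : ζ ∈ sphere (0 : EuclideanSpace ℂ (Fin (n + 1))) 1)
    (hη : η ∈ sphere (0 : EuclideanSpace ℂ (Fin (n + 1))) 1)
    (hφζ : φ ζ = η) :
    σ η = ζ := by
  have hφ' : φ = linearFractional (Matrix.toEuclideanCLM (𝕜 := ℂ) A) (WithLp.toLp 2 B)
      (WithLp.toLp 2 C) d := by
    ext z j
    rw [hφ, linearFractional_toEuclideanCLM_apply]
  have hσ' : σ = linearFractional ((Matrix.toEuclideanCLM (𝕜 := ℂ) A)†) (-WithLp.toLp 2 C)
      (-WithLp.toLp 2 B) (conj d) := by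
    ext z j
    rw [hσ, linearFractional_adjoint_toEuclideanCLM_apply]
  subst hφ' hσ'
  exact linearFractional_adjoint_apply_eq_of_apply_eq hmaps (mem_sphere_zero_iff_norm.mp hζ)
    (mem_sphere_zero_iff_norm.mp hη) hφζ
end

section
/- Let φ be holomorphic near e₁ in ℂ^N with values determined by a linear fractional map with normalized matrix T having first row (t+K, γ₂,...,γ_N, 1-t-K) and last row (K, γ₂,...,γ_N, 1-K). Then the first component satisfies the expansion φ₁(z₁, 0') = 1 + t(z₁-1) - tK(z₁-1)² + o(|z₁-1|²) as (z₁,0') → e₁. -/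
/-!
Subtracting the quadratic Taylor polynomial from the linear fractional map leaves exactly
`t K² (z₁ - 1)³ / (K z₁ + 1 - K)`. The denominator equals `1` at `z₁ = 1`, so this remainder is
`(z₁ - 1)³` times a function bounded near `1`, hence `O(|z₁ - 1|³) = o(|z₁ - 1|²)`.
-/

open Asymptotics Filter Topology

theorem linFrac_sub_quadratic_eq {F : Type*} [Field F] (t K z : F) (hz : K * z + 1 - K ≠ 0) :
    ((t + K) * z + 1 - t - K) / (K * z + 1 - K) - (1 + t * (z - 1) - t * K * (z - 1) ^ 2)
      = (z - 1) ^ 3 * (t * K ^ 2 / (K * z + 1 - K)) := by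
  field_simp
  ring

theorem isLittleO_sub_pow_three_mul {𝕜 : Type*} [NormedField 𝕜] {a : 𝕜} {h : 𝕜 → 𝕜}
    (hh : h =O[𝓝 a] fun _ => (1 : ℝ)) :
    (fun z => (z - a) ^ 3 * h z) =o[𝓝 a] fun z => ‖z - a‖ ^ 2 := by
  have hprod := (isLittleO_pow_sub_pow_sub a (by norm_num : 2 < 3)).mul_isBigO hh.norm_left
  refine IsLittleO.of_norm_left ?_
  simpa only [norm_mul, norm_pow, mul_one] using hprod

theorem stmt_13_general (t : ℝ) (K : ℂ)
    (f : ℂ → ℂ)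
    (hf : f = fun z₁ => ((↑t + K) * z₁ + 1 - ↑t - K) / (K * z₁ + 1 - K)) :
    (fun z₁ : ℂ => f z₁ - (1 + ↑t * (z₁ - 1) - ↑t * K * (z₁ - 1) ^ 2))
      =o[nhds (1 : ℂ)] fun z₁ : ℂ => ‖z₁ - 1‖ ^ 2 := by
  have hden : ContinuousAt (fun z : ℂ => K * z + 1 - K) 1 := by fun_prop
  have hden_one : K * 1 + 1 - K ≠ 0 := by simp
  have hbounded : (fun z : ℂ => (t : ℂ) * K ^ 2 / (K * z + 1 - K)) =O[𝓝 1] fun _ => (1 : ℝ) :=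
    (continuousAt_const.div hden hden_one).tendsto.isBigO_one ℝ
  refine (isLittleO_sub_pow_three_mul hbounded).congr' ?_ EventuallyEq.rfl
  filter_upwards [hden.eventually_ne hden_one] with z hz
  rw [hf, linFrac_sub_quadratic_eq _ _ _ hz]

/-- Second-order expansion of the first component of a normalized linear
fractional map along the slice `z = (z₁, 0')`:
`φ₁(z₁,0') = ((t+K)z₁ + 1 - t - K)/(Kz₁ + 1 - K)
           = 1 + t(z₁-1) - tK(z₁-1)² + o(|z₁-1|²)` as `z₁ → 1`. -/
theorem stmt_13 (t : ℝ) (ht : 0 < t) (K : ℂ)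
    (f : ℂ → ℂ)
    (hf : f = fun z₁ => ((↑t + K) * z₁ + 1 - ↑t - K) / (K * z₁ + 1 - K)) :
    (fun z₁ : ℂ => f z₁ - (1 + ↑t * (z₁ - 1) - ↑t * K * (z₁ - 1) ^ 2))
      =o[nhds (1 : ℂ)] fun z₁ : ℂ => ‖z₁ - 1‖ ^ 2 :=
  stmt_13_general t K f hf
end

section
/- Let t ∈ (0,∞), and suppose (α_{jk})_{j=2}^N and (α'_{jk})_{j=2}^N are complex vectors with Σ_j|α_{jk}|² ≤ t and Σ_j|α'_{jk}|² ≤ t. If (2t - Σ_j|α_{jk}|²)(2t - Σ_j|α'_{jk}|²) = |2t - Σ_j α_{jk} conj(α'_{jk})|², then α_{jk} = α'_{jk} for all j. -/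
/-!
For vectors `x`, `y` of an inner product space write `A = ‖x‖²`, `B = ‖y‖²`, `r = re ⟪y, x⟫`,
so that `‖x - y‖² = A + B - 2r`.
The left side `(2t - A)(2t - B)` is at most `(2t - (A + B)/2)²` by AM-GM, while the right side
`‖2t - ⟪y, x⟫‖²` is at least `(2t - r)² = (2t - (A + B)/2 + ‖x - y‖²/2)²`. Since
`2t - (A + B)/2 ≥ t > 0`, equality forces `‖x - y‖ = 0`.
-/

open RCLike

theorem two_mul_eq_add_of_sq_sub_le_mul_sub {t A B r : ℝ} (ht : 0 < t) (hA : A ≤ t)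
    (hB : B ≤ t) (hr : 2 * r ≤ A + B) (h : (2 * t - r) ^ 2 ≤ (2 * t - A) * (2 * t - B)) :
    2 * r = A + B := by
  nlinarith [sq_nonneg (A - B), sq_nonneg (A + B - 2 * r)]

theorem sq_two_mul_sub_re_le_norm_sq {𝕜 : Type*} [RCLike 𝕜] (t : ℝ) (z : 𝕜) :
    (2 * t - re z) ^ 2 ≤ ‖(2 * t : 𝕜) - z‖ ^ 2 := by
  have hre : re ((2 * t : 𝕜) - z) = 2 * t - re z := by simp
  rw [← hre, ← sq_abs]
  exact pow_le_pow_left₀ (abs_nonneg _) (abs_re_le_norm _) 2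

theorem eq_of_mul_two_mul_sub_norm_sq_eq_norm_sq {𝕜 E : Type*} [RCLike 𝕜]
    [NormedAddCommGroup E] [InnerProductSpace 𝕜 E] {t : ℝ} {x y : E} (ht : 0 < t)
    (hx : ‖x‖ ^ 2 ≤ t) (hy : ‖y‖ ^ 2 ≤ t)
    (h : (2 * t - ‖x‖ ^ 2) * (2 * t - ‖y‖ ^ 2) = ‖(2 * t : 𝕜) - inner 𝕜 y x‖ ^ 2) :
    x = y := by
  have hsub : ‖x - y‖ ^ 2 = ‖x‖ ^ 2 + ‖y‖ ^ 2 - 2 * re (inner 𝕜 y x) := by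
    rw [norm_sub_sq (𝕜 := 𝕜), inner_re_symm]; ring
  have hre : 2 * re (inner 𝕜 y x) = ‖x‖ ^ 2 + ‖y‖ ^ 2 :=
    two_mul_eq_add_of_sq_sub_le_mul_sub ht hx hy (by nlinarith [sq_nonneg ‖x - y‖])
      (h ▸ sq_two_mul_sub_re_le_norm_sq t _)
  rw [← sub_eq_zero, ← norm_eq_zero, ← sq_eq_zero_iff, hsub, hre, sub_self]

/-- Equality-case lemma: if `Σ_j|α_j|² ≤ t`, `Σ_j|α'_j|² ≤ t` with `t > 0` and
`(2t - Σ|α_j|²)(2t - Σ|α'_j|²) = |2t - Σ α_j conj(α'_j)|²`, then `α_j = α'_j`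
for all `j`. -/
theorem stmt_19 (N : ℕ) (t : ℝ) (ht : 0 < t) (α α' : Fin N → ℂ)
    (hα : ∑ j, ‖α j‖ ^ 2 ≤ t)
    (hα' : ∑ j, ‖α' j‖ ^ 2 ≤ t)
    (heq : (2 * t - ∑ j, ‖α j‖ ^ 2)
        * (2 * t - ∑ j, ‖α' j‖ ^ 2)
      = ‖(2 * t : ℂ) - ∑ j, α j * (starRingEnd ℂ) (α' j)‖ ^ 2) :
    ∀ j, α j = α' j := by
  have hnorm (v : Fin N → ℂ) : ‖WithLp.toLp 2 v‖ ^ 2 = ∑ j, ‖v j‖ ^ 2 :=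
    EuclideanSpace.norm_sq_eq _
  have hinner : inner ℂ (WithLp.toLp 2 α') (WithLp.toLp 2 α)
      = ∑ j, α j * (starRingEnd ℂ) (α' j) := by
    rw [EuclideanSpace.inner_toLp_toLp]; rfl
  rw [← hnorm] at hα hα'
  rw [← hnorm α, ← hnorm α', ← hinner] at heq
  have hxy := eq_of_mul_two_mul_sub_norm_sq_eq_norm_sq (𝕜 := ℂ) ht hα hα' heq
  exact congrFun (WithLp.toLp_injective 2 hxy)
end
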